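/- arXiv:2403.05077 — 6 statements merged into one kernel-verified Lean document; each statement's English description precedes it below -/
import Mathlib

section
/- Let θ > 0 and n ≥ 2. For any partition μ of n−1 (viewed as a Young diagram), M^{Ewens}_{θ,n−1}(μ) = Σ_{λ ⊇ μ, λ ⊢ n} (1/n)·m_L(λ)·L · M^{Ewens}_{θ,n}(λ), where the sum is over partitions λ of n obtained from μ by adding one box, L is the length of the row of λ from which a box is removed to get μ, and m_L(λ) is the number of rows of λ of length L. -/
open Finset Nat

/-- The Ewens measure `M^{Ewens}_{θ,n}` on partitions of `n`, written via the
multiset of parts: `(n!/∏_j j^{m_j} m_j!) · θ^{ℓ(λ)}/(θ)_n`. -/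
noncomputable def ewensMeasure (θ : ℝ) (n : ℕ) (q : Multiset ℕ) : ℝ :=
  (n ! : ℝ) / (∏ j ∈ q.toFinset, ((j : ℝ) ^ (q.count j) * ((q.count j)! : ℝ)))
    * θ ^ (Multiset.card q) / (ascPochhammer ℝ n).eval θ

/-!
Adding a box to `μ ⊢ m` either opens a new row of length `1` or lengthens one of the `m_j(μ)` rows
of some length `j`. This multiplies the weight `θ^ℓ / z`, with `z = ∏_j j^{m_j} m_j!`, by
`θ / (m_L(λ) L)` in the first case and by `m_j(μ) j / (m_L(λ) L)` in the second, while `n!/(θ)_n`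
gains the factor `(m+1)/(θ+m)`. So the `λ`-summand is `M_{θ,m}(μ)` times `θ/(θ+m)`, resp.
`m_j(μ) j/(θ+m)`, and these add up to `1` because `Σ_j m_j(μ) j = m`.
-/

noncomputable def zFactor (q : Multiset ℕ) : ℝ :=
  ∏ j ∈ q.toFinset, ((j : ℝ) ^ (q.count j) * ((q.count j)! : ℝ))

lemma zFactor_cons (a : ℕ) (q : Multiset ℕ) :
    zFactor (a ::ₘ q) = a * (q.count a + 1) * zFactor q := by
  set F : Multiset ℕ → ℕ → ℝ := fun q j => (j : ℝ) ^ q.count j * ((q.count j)! : ℝ)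
  have hq : zFactor q = ∏ j ∈ insert a q.toFinset, F q j := by
    rw [zFactor]
    refine Finset.prod_subset (f := F q) (Finset.subset_insert a q.toFinset) fun j _ hj => ?_
    simp [F, Multiset.count_eq_zero.mpr (mt Multiset.mem_toFinset.mpr hj)]
  have hrest : ∏ j ∈ (insert a q.toFinset).erase a, F (a ::ₘ q) j
      = ∏ j ∈ (insert a q.toFinset).erase a, F q j :=
    Finset.prod_congr rfl fun j hj => by
      simp only [F, Multiset.count_cons_of_ne (Finset.ne_of_mem_erase hj)]
  rw [zFactor, hq, Multiset.toFinset_cons,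
    ← Finset.mul_prod_erase _ (F (a ::ₘ q)) (mem_insert_self a _),
    ← Finset.mul_prod_erase _ (F q) (mem_insert_self a _), hrest]
  simp only [F, Multiset.count_cons_self, pow_succ, Nat.factorial_succ]
  push_cast
  ring

noncomputable def ewensWeight (θ : ℝ) (q : Multiset ℕ) : ℝ :=
  θ ^ Multiset.card q / zFactor q

noncomputable def ewensConst (θ : ℝ) (n : ℕ) : ℝ :=
  n ! / (ascPochhammer ℝ n).eval θ

lemma ewensMeasure_eq (θ : ℝ) (n : ℕ) (q : Multiset ℕ) :
    ewensMeasure θ n q = ewensConst θ n * ewensWeight θ q := by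
  rw [ewensMeasure, ewensConst, ewensWeight, zFactor]
  ring

lemma ewensConst_succ (θ : ℝ) (m : ℕ) :
    ewensConst θ (m + 1) = (m + 1) / (θ + m) * ewensConst θ m := by
  rw [ewensConst, ewensConst, ascPochhammer_succ_right, Polynomial.eval_mul, Nat.factorial_succ]
  simp only [Polynomial.eval_add, Polynomial.eval_X, Polynomial.eval_natCast]
  rw [div_eq_mul_inv, div_eq_mul_inv, mul_inv]
  push_cast
  ring

lemma ewensWeight_cons (θ : ℝ) {a : ℕ} (ha : a ≠ 0) (q : Multiset ℕ) :
    (q.count a + 1) * a * ewensWeight θ (a ::ₘ q) = θ * ewensWeight θ q := by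
  rw [ewensWeight, ewensWeight, zFactor_cons, Multiset.card_cons]
  rcases eq_or_ne (zFactor q) 0 with hz | hz
  · simp [hz]
  · have ha' : (a : ℝ) ≠ 0 := by exact_mod_cast ha
    field_simp
    ring

lemma ewensWeight_erase (θ : ℝ) {q : Multiset ℕ} {j : ℕ} (hj : j ∈ q) (hj0 : j ≠ 0) :
    θ * ewensWeight θ (q.erase j) = q.count j * j * ewensWeight θ q := by
  conv_rhs => rw [← Multiset.cons_erase hj, Multiset.count_cons_self]
  rw [← ewensWeight_cons θ hj0]
  push_cast
  ring

-- For a partition `q` (no zero parts), `addBox q 0` opens a new row of length `1`.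
def addBox (q : Multiset ℕ) (j : ℕ) : Multiset ℕ := (j + 1) ::ₘ q.erase j

def removeBox (q : Multiset ℕ) (L : ℕ) : Multiset ℕ :=
  if L = 1 then q.erase 1 else (L - 1) ::ₘ q.erase L

lemma count_mul_ewensWeight_addBox (θ : ℝ) (q : Multiset ℕ) (j : ℕ) :
    ((addBox q j).count (j + 1) : ℝ) * (j + 1 : ℕ) * ewensWeight θ (addBox q j)
      = θ * ewensWeight θ (q.erase j) := by
  rw [addBox, Multiset.count_cons_self, ← ewensWeight_cons θ j.succ_ne_zero]
  push_cast
  ring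

section Boxes

variable {q : Multiset ℕ}

lemma sum_addBox {j : ℕ} (hj : j = 0 ∨ j ∈ q) : (addBox q j).sum = q.sum + 1 := by
  rw [addBox, Multiset.sum_cons]
  rcases hj with rfl | hj
  · by_cases h0 : 0 ∈ q
    · rw [← Multiset.sum_erase h0]
      omega
    · rw [Multiset.erase_of_notMem h0]
      omega
  · rw [← Multiset.sum_erase hj]
    omega

lemma pos_of_mem_addBox (hq : ∀ i ∈ q, 0 < i) {j i : ℕ} (hi : i ∈ addBox q j) : 0 < i := by
  rcases Multiset.mem_cons.mp hi with rfl | hi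
  · exact j.succ_pos
  · exact hq i (Multiset.mem_of_mem_erase hi)

lemma removeBox_addBox (h0 : 0 ∉ q) {j : ℕ} (hj : j = 0 ∨ j ∈ q) :
    removeBox (addBox q j) (j + 1) = q := by
  rcases hj with rfl | hj
  · simp [removeBox, addBox, Multiset.erase_of_notMem h0]
  · have hj0 : j ≠ 0 := by rintro rfl; exact h0 hj
    simp [removeBox, addBox, hj0, Multiset.cons_erase hj]

lemma addBox_removeBox (h0 : 0 ∉ q) {L : ℕ} (hL : L ∈ q) :
    addBox (removeBox q L) (L - 1) = q := by
  by_cases h1 : L = 1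
  · subst h1
    have h0' : 0 ∉ q.erase 1 := fun h => h0 (Multiset.mem_of_mem_erase h)
    simp [removeBox, addBox, Multiset.erase_of_notMem h0', Multiset.cons_erase hL]
  · have hL0 : L ≠ 0 := by rintro rfl; exact h0 hL
    rw [removeBox, if_neg h1, addBox, Multiset.erase_cons_head, Nat.sub_add_cancel (by omega),
      Multiset.cons_erase hL]

lemma sub_one_eq_zero_or_mem_removeBox (L : ℕ) : L - 1 = 0 ∨ L - 1 ∈ removeBox q L := by
  by_cases h1 : L = 1
  · exact Or.inl (by omega)
  · exact Or.inr (by rw [removeBox, if_neg h1]; exact Multiset.mem_cons_self _ _)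

end Boxes

lemma Nat.Partition.zero_notMem_parts {n : ℕ} (p : n.Partition) : 0 ∉ p.parts :=
  fun h => (p.parts_pos h).false

lemma sum_removeBox_eq_sum_addBox {m : ℕ} (μ : m.Partition) (f : Multiset ℕ → ℕ → ℝ) :
    ∑ l : (m + 1).Partition, ∑ L ∈ l.parts.toFinset,
        (if μ.parts = removeBox l.parts L then f l.parts L else 0)
      = ∑ j ∈ insert 0 μ.parts.toFinset, f (addBox μ.parts j) (j + 1) := by
  set S := (univ.sigma fun l : (m + 1).Partition => l.parts.toFinset).filter
    fun p => μ.parts = removeBox p.1.parts p.2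
  have hS : ∀ p ∈ S, p.1.parts = addBox μ.parts (p.2 - 1) ∧ p.2 - 1 + 1 = p.2 := by
    rintro ⟨l, L⟩ hp
    obtain ⟨hL, hμ⟩ : L ∈ l.parts ∧ μ.parts = removeBox l.parts L := by simpa [S] using hp
    exact ⟨by rw [hμ, addBox_removeBox l.zero_notMem_parts hL],
      Nat.sub_add_cancel (l.parts_pos hL)⟩
  refine Eq.trans
    (by rw [Finset.sum_filter, Finset.sum_sigma] : _ = ∑ p ∈ S, f p.1.parts p.2) ?_
  refine Finset.sum_nbij (fun p => p.2 - 1) ?maps ?inj ?surj ?terms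
  case maps =>
    rintro ⟨l, L⟩ hp
    obtain ⟨-, hμ⟩ : L ∈ l.parts ∧ μ.parts = removeBox l.parts L := by simpa [S] using hp
    rcases sub_one_eq_zero_or_mem_removeBox (q := l.parts) L with h | h
    · simp [h]
    · simp [hμ, h]
  case inj =>
    rintro ⟨l, L⟩ hp ⟨l', L'⟩ hp' (h : L - 1 = L' - 1)
    obtain ⟨hl, hL : L - 1 + 1 = L⟩ := hS _ hp
    obtain ⟨hl', hL' : L' - 1 + 1 = L'⟩ := hS _ hp'
    have hLL : L = L' := by omega
    subst hLL
    exact Sigma.ext (Nat.Partition.ext (hl.trans hl'.symm)) HEq.rfl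
  case surj =>
    intro j hj
    have hj' : j = 0 ∨ j ∈ μ.parts := by simpa using hj
    refine ⟨⟨⟨addBox μ.parts j, pos_of_mem_addBox (fun i hi => μ.parts_pos hi),
      by rw [sum_addBox hj', μ.parts_sum]⟩, j + 1⟩,
      Finset.mem_filter.mpr ⟨?_, (removeBox_addBox μ.zero_notMem_parts hj').symm⟩, rfl⟩
    exact Finset.mem_sigma.mpr
      ⟨mem_univ _, Multiset.mem_toFinset.mpr (Multiset.mem_cons_self _ _)⟩
  case terms =>
    intro p hp
    obtain ⟨hl, hL⟩ := hS p hp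
    simp only [hl, hL]

lemma ewensMeasure_eq_sum_addBox (θ : ℝ) {m : ℕ} (hθ : θ + m ≠ 0) (μ : m.Partition) :
    ewensMeasure θ m μ.parts = ∑ j ∈ insert 0 μ.parts.toFinset,
      1 / ((m + 1 : ℕ) : ℝ) * ((addBox μ.parts j).count (j + 1) : ℝ) * ((j + 1 : ℕ) : ℝ)
        * ewensMeasure θ (m + 1) (addBox μ.parts j) := by
  have h0 := μ.zero_notMem_parts
  have hterm : ∀ j, 1 / ((m + 1 : ℕ) : ℝ) * ((addBox μ.parts j).count (j + 1) : ℝ)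
        * ((j + 1 : ℕ) : ℝ) * ewensMeasure θ (m + 1) (addBox μ.parts j)
      = ewensConst θ m / (θ + m) * (θ * ewensWeight θ (μ.parts.erase j)) := by
    intro j
    rw [ewensMeasure_eq, ewensConst_succ, ← count_mul_ewensWeight_addBox]
    field_simp
    push_cast
    ring
  have hcount : ∑ j ∈ μ.parts.toFinset, (μ.parts.count j : ℝ) * j = m := by
    exact_mod_cast ((Finset.sum_multiset_count μ.parts).symm.trans μ.parts_sum :)
  have hsum : ∑ j ∈ μ.parts.toFinset, θ * ewensWeight θ (μ.parts.erase j)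
      = m * ewensWeight θ μ.parts := by
    rw [← hcount, Finset.sum_mul]
    refine Finset.sum_congr rfl fun j hj => ewensWeight_erase θ (Multiset.mem_toFinset.mp hj) ?_
    rintro rfl
    exact h0 (Multiset.mem_toFinset.mp hj)
  rw [Finset.sum_congr rfl fun j _ => hterm j, ← Finset.mul_sum,
    Finset.sum_insert (by simpa using h0), Multiset.erase_of_notMem h0, hsum, ewensMeasure_eq]
  field_simp

/-- Consistency of the Ewens measures: for a partition `μ` of `n-1`,
`M^{Ewens}_{θ,n-1}(μ) = Σ_{λ ⊢ n, λ ⊇ μ} (1/n)·m_L(λ)·L·M^{Ewens}_{θ,n}(λ)`,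
where `L` is the length of the row of `λ` from which a box is removed to get `μ`. -/
theorem ewens_partition_structure (θ : ℝ) (hθ : 0 < θ) (n : ℕ) (hn : 2 ≤ n)
    (μ : (n - 1).Partition) :
    ewensMeasure θ (n - 1) μ.parts =
      ∑ l : n.Partition, ∑ L ∈ l.parts.toFinset,
        (if μ.parts = (if L = 1 then l.parts.erase 1
              else (L - 1) ::ₘ l.parts.erase L) then
          (1 / (n : ℝ)) * (l.parts.count L) * L * ewensMeasure θ n l.parts
        else 0) := by
  obtain ⟨m, rfl⟩ : ∃ m, n = m + 1 := ⟨n - 1, by omega⟩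
  rw [ewensMeasure_eq_sum_addBox θ (by positivity) μ]
  exact (sum_removeBox_eq_sum_addBox μ
    fun l L => 1 / ((m + 1 : ℕ) : ℝ) * (l.count L) * L * ewensMeasure θ (m + 1) l).symm
end

section
/- Let θ₁,…,θ_k > 0. For every partition λ = (1^{m₁} 2^{m₂} ⋯ n^{m_n}) of n, the sum of M^{Ewens}_{θ₁,…,θ_k;n}(λ^{(1)},…,λ^{(k)}) over all k-tuples of partitions whose row-multiset union equals λ (i.e. m_j^{(1)}+…+m_j^{(k)} = m_j for all j) equals M^{Ewens}_{θ₁+…+θ_k;n}(λ), the classical Ewens measure with parameter θ₁+…+θ_k. -/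
/-!
Both measures carry the factor `n! / (Θ)_n` with `Θ = θ₁ + … + θ_k`, and what remains factorises
over the distinct part sizes `j` of `λ`: a `k`-tuple with union `λ` is the same as a choice, for
each `j`, of a composition `m_j = m_j^{(1)} + … + m_j^{(k)}`. The sum is therefore a product over
`j` of `∑ ∏_l (θ_l / j)^{a_l} / a_l!` over compositions `a` of `m_j`, and by the multinomial
theorem each factor equals `(Θ / j)^{m_j} / m_j!`, the corresponding factor of the Ewens measure.
-/

open Finset Nat

/-- The multiple Ewens measure on `k`-tuples of partitions (each given by its
multiset of parts) with total size `n`. -/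
noncomputable def multipleEwensMeasure {k : ℕ} (θ : Fin k → ℝ) (n : ℕ)
    (P : Fin k → Multiset ℕ) : ℝ :=
  (n ! : ℝ) / (ascPochhammer ℝ n).eval (∑ l, θ l) *
    ∏ l, ∏ j ∈ (P l).toFinset,
      (θ l / (j : ℝ)) ^ ((P l).count j) / (((P l).count j)! : ℝ)

theorem Finset.sum_piAntidiag_prod_pow_div_factorial {ι K : Type*} [DecidableEq ι] [Field K]
    [CharZero K] (s : Finset ι) (x : ι → K) (m : ℕ) :
    ∑ a ∈ piAntidiag s m, ∏ i ∈ s, x i ^ a i / ((a i)! : K) = (∑ i ∈ s, x i) ^ m / (m ! : K) := by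
  rw [sum_pow_eq_sum_piAntidiag, sum_div]
  refine sum_congr rfl fun a ha => ?_
  have hfact : (∏ i ∈ s, ((a i)! : K)) * Nat.multinomial s a = m ! := by
    rw [← (mem_piAntidiag.1 ha).1]
    exact_mod_cast Nat.multinomial_spec s a
  have hprod : (∏ i ∈ s, ((a i)! : K)) ≠ 0 :=
    prod_ne_zero_iff.2 fun i _ => Nat.cast_ne_zero.2 (factorial_ne_zero _)
  rw [prod_div_distrib, eq_div_iff (Nat.cast_ne_zero.2 (factorial_ne_zero _)), ← hfact]
  field_simp

namespace Multiset

variable {ι α : Type*} [Fintype ι]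

theorem le_of_sum_eq {P : ι → Multiset α} {q : Multiset α} (hP : ∑ l, P l = q) (l : ι) :
    P l ≤ q :=
  hP ▸ Finset.single_le_sum (fun _ _ => zero_le _) (mem_univ l)

variable [DecidableEq ι] [DecidableEq α]

theorem count_sum_replicate (s : Finset α) (c : s → ℕ) (b : α) :
    count b (∑ j : s, replicate (c j) (j : α)) = if hb : b ∈ s then c ⟨b, hb⟩ else 0 := by
  rw [count_sum']
  split_ifs with hb
  · rw [sum_eq_single_of_mem ⟨b, hb⟩ (mem_univ _) fun j _ hj => ?_]
    · simp
    · rw [count_replicate, if_neg fun h => hj (Subtype.ext h)]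
  · refine Finset.sum_eq_zero fun j _ => ?_
    rw [count_replicate, if_neg fun h : (j : α) = b => hb (h ▸ j.2)]

def sumEqEquivPiAntidiag (q : Multiset α) :
    {P : ι → Multiset α // ∑ l, P l = q} ≃
      ((j : q.toFinset) → piAntidiag (univ : Finset ι) (q.count (j : α))) where
  toFun P j := ⟨fun l => (P.1 l).count (j : α), by
    rw [mem_piAntidiag, ← count_sum', P.2]
    exact ⟨rfl, fun l _ => mem_univ l⟩⟩
  invFun p := ⟨fun l => ∑ j, replicate ((p j).1 l) (j : α), by
    ext b
    rw [count_sum']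
    simp_rw [count_sum_replicate]
    split_ifs with hb
    · exact (mem_piAntidiag.1 (p ⟨b, hb⟩).2).1
    · rw [sum_const_zero, eq_comm, count_eq_zero, ← mem_toFinset]
      exact hb⟩
  left_inv P := by
    ext l b
    rw [count_sum_replicate]
    split_ifs with hb
    · rfl
    · rw [eq_comm, count_eq_zero]
      exact fun hmem => hb (mem_toFinset.2 (mem_of_le (le_of_sum_eq P.2 l) hmem))
  right_inv p := by
    ext j l
    simp only [count_sum_replicate, j.2, dite_true]

noncomputable instance (q : Multiset α) : Fintype {P : ι → Multiset α // ∑ l, P l = q} :=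
  Fintype.ofEquiv _ (sumEqEquivPiAntidiag q).symm

theorem sum_prod_count_eq_prod_sum_piAntidiag {R : Type*} [CommSemiring R] (q : Multiset α)
    (g : α → (ι → ℕ) → R) :
    ∑ P : {P : ι → Multiset α // ∑ l, P l = q}, ∏ j ∈ q.toFinset, g j (fun l => (P.1 l).count j)
      = ∏ j ∈ q.toFinset, ∑ a ∈ piAntidiag univ (q.count j), g j a := by
  rw [← prod_coe_sort]
  simp_rw [← sum_coe_sort (piAntidiag _ _)]
  rw [Fintype.prod_sum]
  exact Fintype.sum_equiv (sumEqEquivPiAntidiag q) _ _ fun P => (prod_coe_sort _ _).symm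

end Multiset

theorem ewensMeasure_eq_mul_prod (θ : ℝ) (n : ℕ) (q : Multiset ℕ) :
    ewensMeasure θ n q = (n ! : ℝ) / (ascPochhammer ℝ n).eval θ *
      ∏ j ∈ q.toFinset, (θ / (j : ℝ)) ^ q.count j / ((q.count j)! : ℝ) := by
  simp_rw [ewensMeasure, div_pow, div_div, prod_div_distrib, prod_pow_eq_pow_sum,
    Multiset.toFinset_sum_count_eq]
  ring

theorem multipleEwensMeasure_eq_mul_prod_of_subset {k : ℕ} (θ : Fin k → ℝ) (n : ℕ)
    {P : Fin k → Multiset ℕ} {s : Finset ℕ} (hs : ∀ l, (P l).toFinset ⊆ s) :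
    multipleEwensMeasure θ n P = (n ! : ℝ) / (ascPochhammer ℝ n).eval (∑ l, θ l) *
      ∏ j ∈ s, ∏ l, (θ l / (j : ℝ)) ^ (P l).count j / (((P l).count j)! : ℝ) := by
  rw [multipleEwensMeasure, prod_comm]
  congr 1
  refine prod_congr rfl fun l _ => prod_subset (hs l) fun j _ hj => ?_
  rw [Multiset.count_eq_zero_of_notMem (mt Multiset.mem_toFinset.2 hj)]
  simp

theorem multipleEwens_sum_over_unions_general (k n : ℕ) (θ : Fin k → ℝ) (lam : n.Partition) :
    ∑' P : {P : Fin k → Multiset ℕ // ∑ l, P l = lam.parts},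
      multipleEwensMeasure θ n P.1 = ewensMeasure (∑ l, θ l) n lam.parts := by
  set q := lam.parts
  have hsubset (P : {P : Fin k → Multiset ℕ // ∑ l, P l = q}) (l : Fin k) :
      (P.1 l).toFinset ⊆ q.toFinset :=
    Multiset.toFinset_subset.2 (Multiset.subset_of_le (Multiset.le_of_sum_eq P.2 l))
  rw [tsum_fintype, ewensMeasure_eq_mul_prod]
  simp_rw [multipleEwensMeasure_eq_mul_prod_of_subset θ n (hsubset _)]
  rw [← mul_sum, Multiset.sum_prod_count_eq_prod_sum_piAntidiag q
    fun j a => ∏ l, (θ l / (j : ℝ)) ^ a l / ((a l)! : ℝ)]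
  simp_rw [sum_piAntidiag_prod_pow_div_factorial, ← sum_div]

/-- Summing the multiple Ewens measure over all `k`-tuples of partitions whose
row-multiset union is a fixed partition `λ` of `n` gives the classical Ewens
measure with parameter `θ₁+…+θ_k`. -/
theorem multipleEwens_sum_over_unions (k n : ℕ) (θ : Fin k → ℝ)
    (hθ : ∀ l, 0 < θ l) (lam : n.Partition) :
    ∑' P : {P : Fin k → Multiset ℕ // ∑ l, P l = lam.parts},
      multipleEwensMeasure θ n P.1 = ewensMeasure (∑ l, θ l) n lam.parts :=
  multipleEwens_sum_over_unions_general k n θ lam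
end

section
/- For x > 0 and every positive integer n, the harmonic-type sum H_n^{(1)}(x) = Σ_{j=1}^n 1/(x+j−1) satisfies n/(2x(x+n)) < H_n^{(1)}(x) − log(1 + n/x) < n/(x(x+n)). -/
open Finset Real

/-!
For `y > 0` the increment `log (y + 1) - log y = ∫_y^{y+1} dt / t` lies strictly between the
right-endpoint value `1 / (y + 1)` and the trapezoid value `(1 / y + 1 / (y + 1)) / 2`; the latter
is `t < sinh t` at `t = log (1 + 1 / y)`. Hence `1 / y - (log (y + 1) - log y)` lies strictly
between half of `1 / y - 1 / (y + 1)` and all of it, and summing over `y = x, …, x + n - 1`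
telescopes to bounds by `1 / x - 1 / (x + n) = n / (x (x + n))`.
-/

namespace Real

theorem log_lt_sub_inv_div_two {z : ℝ} (hz : 1 < z) : log z < (z - z⁻¹) / 2 := by
  rw [← sinh_log (by linarith)]
  exact self_lt_sinh_iff.mpr (log_pos hz)

theorem inv_add_one_lt_log_add_one_sub_log {y : ℝ} (hy : 0 < y) :
    (y + 1)⁻¹ < log (y + 1) - log y := by
  have hy1 : 0 < y + 1 := by linarith
  have h := log_lt_sub_one_of_pos (div_pos hy hy1) (div_lt_one hy1 |>.mpr (by linarith)).ne
  rw [log_div hy.ne' hy1.ne'] at h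
  have : y / (y + 1) - 1 = -(y + 1)⁻¹ := by field_simp; ring
  linarith

theorem log_add_one_sub_log_lt_inv_add_inv_div_two {y : ℝ} (hy : 0 < y) :
    log (y + 1) - log y < (y⁻¹ + (y + 1)⁻¹) / 2 := by
  have hz : 1 < (y + 1) / y := (one_lt_div hy).mpr (by linarith)
  have h := log_lt_sub_inv_div_two hz
  rw [log_div (by linarith) hy.ne', inv_div] at h
  convert h using 2
  field_simp
  ring

end Real

theorem sum_inv_add_sub_log_bounds {x : ℝ} (hx : 0 < x) {n : ℕ} (hn : n ≠ 0) :
    (x⁻¹ - (x + n)⁻¹) / 2 < ∑ k ∈ range n, (x + k)⁻¹ - (log (x + n) - log x) ∧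
      ∑ k ∈ range n, (x + k)⁻¹ - (log (x + n) - log x) < x⁻¹ - (x + n)⁻¹ := by
  have hlog := sum_range_sub (fun k : ℕ ↦ log (x + k)) n
  have hinv := sum_range_sub' (fun k : ℕ ↦ (x + k)⁻¹) n
  simp only [Nat.cast_add, Nat.cast_one, Nat.cast_zero, add_zero, ← add_assoc] at hlog hinv
  rw [← hlog, ← sum_sub_distrib, ← hinv, sum_div]
  have hne : (range n).Nonempty := nonempty_range_iff.mpr hn
  constructor
  · refine sum_lt_sum_of_nonempty hne fun k _ ↦ ?_
    have := Real.log_add_one_sub_log_lt_inv_add_inv_div_two (y := x + k) (by positivity)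
    linarith
  · refine sum_lt_sum_of_nonempty hne fun k _ ↦ ?_
    have := Real.inv_add_one_lt_log_add_one_sub_log (y := x + k) (by positivity)
    linarith

/-- Bounds for the harmonic-type sum `H_n^{(1)}(x) = Σ_{j=1}^n 1/(x+j−1)`:
`n/(2x(x+n)) < H_n^{(1)}(x) − log(1 + n/x) < n/(x(x+n))`. -/
theorem harmonic_sum_log_bounds (x : ℝ) (hx : 0 < x) (n : ℕ) (hn : 1 ≤ n) :
    (n : ℝ) / (2 * x * (x + n)) <
        (∑ j ∈ Finset.Icc 1 n, 1 / (x + (j : ℝ) - 1)) - Real.log (1 + (n : ℝ) / x) ∧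
      (∑ j ∈ Finset.Icc 1 n, 1 / (x + (j : ℝ) - 1)) - Real.log (1 + (n : ℝ) / x) <
        (n : ℝ) / (x * (x + n)) := by
  have hxn : 0 < x + n := by positivity
  have hsum : ∑ j ∈ Icc 1 n, 1 / (x + (j : ℝ) - 1) = ∑ k ∈ range n, (x + k)⁻¹ := by
    rw [range_eq_Ico, ← Ico_add_one_right_eq_Icc, ← zero_add 1, ← sum_Ico_add']
    simp [← add_assoc]
  have hlog : log (1 + (n : ℝ) / x) = log (x + n) - log x := by
    rw [← log_div hxn.ne' hx.ne', add_div, div_self hx.ne']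
  have hdiff : (n : ℝ) / (x * (x + n)) = x⁻¹ - (x + n)⁻¹ := by
    field_simp
    ring
  have hhalf : (n : ℝ) / (2 * x * (x + n)) = (x⁻¹ - (x + n)⁻¹) / 2 := by
    rw [← hdiff]
    field_simp
  rw [hsum, hlog, hdiff, hhalf]
  exact sum_inv_add_sub_log_bounds hx (by omega)
end

section
/- With θ₁,…,θ_k > 0 fixed constants, K_n^{(l)} / log n converges in probability to θ_l as n → ∞, where K_n^{(l)} = Σ_{j=1}^n Y_j^{(l)} is a sum of independent Bernoulli variables with P(Y_j^{(l)}=1) = θ_l/(θ₁+…+θ_k+j−1). -/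
/-!
With `T = θ₁ + ⋯ + θ_k`, the mean of `K_n = ∑_{j<n} Y_j` is `θ_l ∑_{j<n} (T + j)⁻¹`, which is
`θ_l log n + O(1)` because each term is squeezed between consecutive increments of
`log (T + j)`. Since the `Y_j` are independent indicators, `Var K_n ≤ E K_n = O(log n)`, which is
`o((log n)²)`, so Chebyshev's inequality concentrates `K_n / log n` at `θ_l`.
-/

open Finset MeasureTheory ProbabilityTheory Filter Topology

namespace Real

lemma inv_add_one_le_log_add_one_sub_log {x : ℝ} (hx : 0 < x) :
    (x + 1)⁻¹ ≤ log (x + 1) - log x := by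
  have h := one_sub_inv_le_log_of_pos (x := (x + 1) / x) (by positivity)
  rw [log_div (by positivity) hx.ne', inv_div] at h
  convert h using 1
  field_simp
  ring

lemma log_add_one_sub_log_le_inv {x : ℝ} (hx : 0 < x) :
    log (x + 1) - log x ≤ x⁻¹ := by
  have h := log_le_sub_one_of_pos (x := (x + 1) / x) (by positivity)
  rw [log_div (by positivity) hx.ne'] at h
  convert h using 1
  field_simp
  ring

lemma log_add_natCast_sub_log_eq_sum (T : ℝ) (n : ℕ) :
    log (T + n) - log T = ∑ j ∈ range n, (log (T + j + 1) - log (T + j)) := by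
  have h := sum_range_sub (fun j : ℕ => log (T + j)) n
  simp only [Nat.cast_add, Nat.cast_one, Nat.cast_zero, add_zero, ← add_assoc] at h
  exact h.symm

lemma log_add_natCast_sub_log_le_sum_inv {T : ℝ} (hT : 0 < T) (n : ℕ) :
    log (T + n) - log T ≤ ∑ j ∈ range n, (T + j)⁻¹ := by
  rw [log_add_natCast_sub_log_eq_sum]
  exact sum_le_sum fun j _ => log_add_one_sub_log_le_inv (by positivity)

lemma sum_inv_le_inv_add_log_add_natCast_sub_log {T : ℝ} (hT : 0 < T) (n : ℕ) :
    ∑ j ∈ range n, (T + j)⁻¹ ≤ T⁻¹ + (log (T + n) - log T) := by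
  calc ∑ j ∈ range n, (T + j)⁻¹
      ≤ ∑ j ∈ range (n + 1), (T + j)⁻¹ :=
        sum_le_sum_of_subset_of_nonneg (range_mono n.le_succ) fun j _ _ => by positivity
    _ = ∑ j ∈ range n, (T + j + 1)⁻¹ + T⁻¹ := by
        rw [sum_range_succ']
        push_cast
        simp [add_assoc]
    _ ≤ (log (T + n) - log T) + T⁻¹ := by
        rw [log_add_natCast_sub_log_eq_sum]
        gcongr with j
        exact inv_add_one_le_log_add_one_sub_log (by positivity)
    _ = T⁻¹ + (log (T + n) - log T) := add_comm _ _

lemma tendsto_sum_inv_add_natCast_div_log {T : ℝ} (hT : 0 < T) :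
    Tendsto (fun n : ℕ => (∑ j ∈ range n, (T + j)⁻¹) / log n) atTop (𝓝 1) := by
  have hlog : Tendsto (fun n : ℕ => log n) atTop atTop :=
    tendsto_log_atTop.comp tendsto_natCast_atTop_atTop
  have hlower : ∀ᶠ n : ℕ in atTop, -log T ≤ ∑ j ∈ range n, (T + j)⁻¹ - log n := by
    filter_upwards [eventually_ge_atTop 1] with n hn
    have hn' : (0 : ℝ) < n := by exact_mod_cast hn
    have := log_le_log hn' (le_add_of_nonneg_left hT.le)
    linarith [log_add_natCast_sub_log_le_sum_inv hT n]
  have hupper : ∀ᶠ n : ℕ in atTop,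
      ∑ j ∈ range n, (T + j)⁻¹ - log n ≤ T⁻¹ + log (T + 1) - log T := by
    filter_upwards [eventually_ge_atTop 1] with n hn
    have hn' : (1 : ℝ) ≤ n := by exact_mod_cast hn
    have h : log (T + n) ≤ log (T + 1) + log n := by
      rw [← log_mul (by positivity) (by positivity)]
      exact log_le_log (by positivity) (by nlinarith)
    linarith [sum_inv_le_inv_add_log_add_natCast_sub_log hT n]
  have := (tendsto_bdd_div_atTop_nhds_zero hlower hupper hlog).const_add 1
  rw [add_zero] at this
  refine this.congr' ?_
  filter_upwards [hlog.eventually_gt_atTop 0] with n hn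
  field_simp
  ring

end Real

section Probability

variable {Ω : Type*} [MeasurableSpace Ω] {μ : Measure Ω}

lemma integral_eq_measureReal_of_eq_zero_or_eq_one {X : Ω → ℝ} (hX : Measurable X)
    (h : ∀ᵐ ω ∂μ, X ω = 0 ∨ X ω = 1) :
    μ[X] = μ.real {ω | X ω = 1} := by
  have hX_eq : X =ᵐ[μ] Set.indicator {ω | X ω = 1} 1 := by
    filter_upwards [h] with ω hω
    rcases hω with h | h <;> simp [h]
  rw [integral_congr_ae hX_eq]
  exact integral_indicator_one (hX (measurableSet_singleton 1))

theorem tendsto_measure_le_abs_div_sub_of_tendsto_variance [IsFiniteMeasure μ]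
    {ι : Type*} {l : Filter ι} {S : ι → Ω → ℝ} {a : ι → ℝ} {c ε : ℝ}
    (hS : ∀ i, MemLp (S i) 2 μ) (ha : ∀ᶠ i in l, 0 < a i)
    (hmean : Tendsto (fun i => μ[S i] / a i) l (𝓝 c))
    (hvar : Tendsto (fun i => Var[S i; μ] / a i ^ 2) l (𝓝 0)) (hε : 0 < ε) :
    Tendsto (fun i => μ {ω | ε ≤ |S i ω / a i - c|}) l (𝓝 0) := by
  have hlim : Tendsto (fun i => ENNReal.ofReal (Var[S i; μ] / (ε / 2 * a i) ^ 2)) l (𝓝 0) := by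
    have h := ENNReal.tendsto_ofReal (hvar.const_mul ((ε / 2) ^ 2)⁻¹)
    rw [mul_zero, ENNReal.ofReal_zero] at h
    refine h.congr fun i => ?_
    rw [mul_pow]
    ring_nf
  refine tendsto_of_tendsto_of_tendsto_of_le_of_le' tendsto_const_nhds hlim
    (Eventually.of_forall fun _ => zero_le) ?_
  filter_upwards [ha, hmean.eventually (Metric.ball_mem_nhds c (half_pos hε))]
    with i hai hci
  rw [Real.dist_eq] at hci
  refine (measure_mono fun ω hω => ?_).trans (meas_ge_le_variance_div_sq (hS i) (by positivity))
  simp only [Set.mem_ofPred_eq] at hω ⊢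
  have htri := abs_sub_le (S i ω / a i) (μ[S i] / a i) c
  rw [div_sub_div_same, abs_div, abs_of_pos hai] at htri
  rw [← le_div_iff₀ hai]
  linarith

lemma variance_le_integral_of_mem_Icc [IsProbabilityMeasure μ] {X : Ω → ℝ}
    (hm : AEStronglyMeasurable X μ) (hX : ∀ᵐ ω ∂μ, X ω ∈ Set.Icc 0 1) :
    Var[X; μ] ≤ μ[X] := by
  have hint : Integrable X μ := Integrable.of_mem_Icc 0 1 hm.aemeasurable hX
  refine (variance_le_expectation_sq hm).trans (integral_mono_ae ?_ hint ?_)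
  · refine hint.mono (hm.pow 2) ?_
    filter_upwards [hX] with ω ⟨h0, h1⟩
    simp only [Pi.pow_apply, norm_pow, Real.norm_eq_abs, abs_of_nonneg h0]
    nlinarith
  · filter_upwards [hX] with ω ⟨h0, h1⟩
    simp only [Pi.pow_apply]
    nlinarith

lemma variance_sum_le_sum_integral_of_mem_Icc [IsProbabilityMeasure μ] {ι : Type*}
    {Y : ι → Ω → ℝ} (hm : ∀ i, AEStronglyMeasurable (Y i) μ)
    (hY : ∀ i, ∀ᵐ ω ∂μ, Y i ω ∈ Set.Icc 0 1) (hind : Pairwise fun i j => Y i ⟂ᵢ[μ] Y j)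
    (s : Finset ι) :
    Var[∑ i ∈ s, Y i; μ] ≤ ∑ i ∈ s, μ[Y i] := by
  rw [IndepFun.variance_sum (fun i _ => memLp_of_bounded (hY i) (hm i) 2)
    fun i _ j _ hij => hind hij]
  exact sum_le_sum fun i _ => variance_le_integral_of_mem_Icc (hm i) (hY i)

theorem tendsto_measure_le_abs_sum_div_sub_of_mem_Icc [IsProbabilityMeasure μ]
    {Y : ℕ → Ω → ℝ} {a : ℕ → ℝ} {c ε : ℝ} (hm : ∀ j, AEStronglyMeasurable (Y j) μ)
    (hY : ∀ j, ∀ᵐ ω ∂μ, Y j ω ∈ Set.Icc 0 1) (hind : Pairwise fun i j => Y i ⟂ᵢ[μ] Y j)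
    (ha : Tendsto a atTop atTop)
    (hmean : Tendsto (fun n => (∑ j ∈ range n, μ[Y j]) / a n) atTop (𝓝 c)) (hε : 0 < ε) :
    Tendsto (fun n => μ {ω | ε ≤ |(∑ j ∈ range n, Y j ω) / a n - c|}) atTop (𝓝 0) := by
  have hS : ∀ n, MemLp (∑ j ∈ range n, Y j) 2 μ := fun n =>
    memLp_finsetSum' _ fun j _ => memLp_of_bounded (hY j) (hm j) 2
  have hmean' : ∀ n, μ[∑ j ∈ range n, Y j] = ∑ j ∈ range n, μ[Y j] := fun n => by
    simp only [Finset.sum_apply]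
    exact integral_finsetSum _ fun j _ => Integrable.of_mem_Icc 0 1 (hm j).aemeasurable (hY j)
  have hpos : ∀ᶠ n in atTop, 0 < a n := ha.eventually_gt_atTop 0
  have hvar : Tendsto (fun n => Var[∑ j ∈ range n, Y j; μ] / a n ^ 2) atTop (𝓝 0) := by
    have hupper := hmean.mul ha.inv_tendsto_atTop
    rw [mul_zero] at hupper
    refine tendsto_of_tendsto_of_tendsto_of_le_of_le' tendsto_const_nhds hupper
      (Eventually.of_forall fun n => div_nonneg (variance_nonneg _ _) (sq_nonneg _)) ?_
    filter_upwards [hpos] with n hn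
    rw [Pi.inv_apply, ← div_eq_mul_inv, div_div, ← sq]
    gcongr
    exact variance_sum_le_sum_integral_of_mem_Icc hm hY hind _
  simpa only [Finset.sum_apply] using tendsto_measure_le_abs_div_sub_of_tendsto_variance hS hpos
    (by simpa only [hmean'] using hmean) hvar hε

end Probability

/-- Law of large numbers for the number of alleles: with fixed mutation parameters,
`K_n^{(l)}/log n → θ_l` in probability, where `K_n^{(l)} = Σ_{j=1}^n Y_j^{(l)}`
is a sum of independent Bernoulli variables with
`P(Y_j^{(l)} = 1) = θ_l/(θ₁+…+θ_k+j−1)`. -/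
theorem numberOfAlleles_convergence_in_probability
    {Ω : Type*} [MeasureSpace Ω] [IsProbabilityMeasure (ℙ : Measure Ω)]
    (k : ℕ) (θ : Fin k → ℝ) (hθ : ∀ i, 0 < θ i) (l : Fin k)
    (Y : ℕ → Ω → ℝ) (hmeas : ∀ j, Measurable (Y j))
    (hind : iIndepFun Y ℙ)
    (hval : ∀ j ω, Y j ω = 0 ∨ Y j ω = 1)
    (hp : ∀ j : ℕ, (ℙ {ω | Y j ω = 1}).toReal = θ l / (∑ i, θ i + (j : ℝ))) :
    ∀ ε > (0 : ℝ),
      Tendsto (fun n : ℕ =>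
          ℙ {ω | ε ≤ |(∑ j ∈ Finset.range n, Y j ω) / Real.log n - θ l|})
        atTop (nhds 0) := by
  intro ε hε
  have hT : 0 < ∑ i, θ i :=
    (hθ l).trans_le (single_le_sum (fun i _ => (hθ i).le) (mem_univ l))
  have hmean : ∀ j : ℕ, ℙ[Y j] = θ l * (∑ i, θ i + j)⁻¹ := fun j => by
    rw [integral_eq_measureReal_of_eq_zero_or_eq_one (hmeas j) (ae_of_all _ (hval j)),
      measureReal_def, hp, div_eq_mul_inv]
  refine tendsto_measure_le_abs_sum_div_sub_of_mem_Icc (fun j => (hmeas j).aestronglyMeasurable)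
    (fun j => ae_of_all _ fun ω => ?_) (fun i j hij => hind.indepFun hij)
    (Real.tendsto_log_atTop.comp tendsto_natCast_atTop_atTop) ?_ hε
  · rcases hval j ω with h | h <;> simp [h]
  · simp_rw [hmean, ← mul_sum, mul_div_assoc]
    simpa using (Real.tendsto_sum_inv_add_natCast_div_log hT).const_mul (θ l)
end

section
/- Let η_j(θ_l), j=1,…,n, l=1,…,k, be independent Poisson random variables with E(η_j(θ_l)) = θ_l/j. Then P(Σ_{l=1}^k Σ_{j=1}^n j·η_j(θ_l) = n) = ((θ₁+…+θ_k)_n / n!) · exp(−(θ₁+…+θ_k) Σ_{j=1}^n 1/j). -/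
open Finset MeasureTheory ProbabilityTheory Nat

/-! By independence, the probability is `exp (-∑ r)` times the sum, over all ways `c` of writing
`n = ∑_{l,j} j c_{l,j}`, of `∏ r^c / c!`, where `r_{l,j} = θ_l / j`. That sum is the coefficient
of `x^n` in `exp (Θ ∑_{j ≤ n} x^j / j)`, `Θ = ∑ θ_l`, which agrees up to degree `n` with
`(1 - x)^(-Θ) = ∑ (Θ)_m x^m / m!`. Instead of power series we compare coefficients directly: both
sequences satisfy `m a_m = Θ ∑_{i < m} a_i` for `m ≤ n` (the coefficients of `x F' = x G' F` for
`F = exp G`) and start with `a_0 = 1`. -/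

lemma natCast_mul_ascPochhammer_eval_div_factorial (x : ℝ) (m : ℕ) :
    (m : ℝ) * ((ascPochhammer ℝ m).eval x / m !) =
      x * ∑ i ∈ range m, (ascPochhammer ℝ i).eval x / i ! := by
  induction m with
  | zero => simp
  | succ m ih =>
    rw [sum_range_succ, mul_add, ← ih, ascPochhammer_succ_right, factorial_succ]
    simp only [Polynomial.eval_mul, Polynomial.eval_add, Polynomial.eval_X,
      Polynomial.eval_natCast]
    push_cast
    field_simp
    ring

lemma Fin.sum_ite_add_one_le_eq_sum_range {M : Type*} [AddCommMonoid M] (f : ℕ → M)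
    {m n : ℕ} (hm : m ≤ n) :
    ∑ j : Fin n, (if (j : ℕ) + 1 ≤ m then f (m - ((j : ℕ) + 1)) else 0) =
      ∑ i ∈ range m, f i := by
  rw [Fin.sum_univ_eq_sum_range (fun j => if j + 1 ≤ m then f (m - (j + 1)) else 0), ← sum_filter]
  have : {j ∈ range n | j + 1 ≤ m} = range m := by
    ext j
    simp only [mem_filter, mem_range]
    omega
  rw [this, ← sum_range_reflect f m]
  exact sum_congr rfl fun j hj => by rw [mem_range] at hj; congr 1; omega

lemma sum_div_succ_eq_mul_sum_Icc {k n : ℕ} (θ : Fin k → ℝ) :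
    ∑ p : Fin k × Fin n, θ p.1 / ((p.2 : ℕ) + 1) =
      (∑ l, θ l) * ∑ j ∈ Icc 1 n, 1 / (j : ℝ) := by
  rw [Fintype.sum_prod_type, sum_mul, ← Ico_add_one_right_eq_Icc, sum_Ico_eq_sum_range,
    add_tsub_cancel_right]
  refine sum_congr rfl fun l _ => ?_
  rw [Fin.sum_univ_eq_sum_range (fun j => θ l / ((j : ℝ) + 1)), mul_sum]
  refine sum_congr rfl fun j _ => ?_
  push_cast
  ring

namespace WeightedComposition

variable {ι : Type*} [Fintype ι]

lemma mul_le_of_weightedSum_eq {w c : ι → ℕ} {m : ℕ} (hc : ∑ q, w q * c q = m) (p : ι) :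
    w p * c p ≤ m :=
  hc ▸ single_le_sum (f := fun q => w q * c q) (fun _ _ => Nat.zero_le _) (mem_univ p)

variable [DecidableEq ι]

def weightedCompositions (w : ι → ℕ) (m : ℕ) : Finset (ι → ℕ) :=
  {c ∈ Fintype.piFinset fun _ => range (m + 1) | ∑ p, w p * c p = m}

noncomputable def expCoeff (r : ι → ℝ) (c : ι → ℕ) : ℝ := ∏ p, r p ^ c p / (c p)!

/-- The coefficient of `x ^ m` in `∏ p, exp (r p * x ^ w p)`. -/
noncomputable def compositionSum (w : ι → ℕ) (r : ι → ℝ) (m : ℕ) : ℝ :=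
  ∑ c ∈ weightedCompositions w m, expCoeff r c

variable {w : ι → ℕ} (r : ι → ℝ)

lemma mem_weightedCompositions (hw : ∀ p, 0 < w p) {m : ℕ} {c : ι → ℕ} :
    c ∈ weightedCompositions w m ↔ ∑ p, w p * c p = m := by
  refine ⟨fun h => (mem_filter.mp h).2, fun h => mem_filter.mpr ⟨?_, h⟩⟩
  refine Fintype.mem_piFinset.mpr fun p => mem_range_succ_iff.mpr ?_
  exact (Nat.le_mul_of_pos_left _ (hw p)).trans (mul_le_of_weightedSum_eq h p)

lemma weightedSum_add_single (w c : ι → ℕ) (p : ι) :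
    ∑ q, w q * (c + Pi.single p 1 : ι → ℕ) q = ∑ q, w q * c q + w p := by
  simp [mul_add, sum_add_distrib, Pi.single_apply]

lemma compositionSum_zero (hw : ∀ p, 0 < w p) : compositionSum w r 0 = 1 := by
  have : weightedCompositions w 0 = {0} := by
    ext c
    simp only [mem_weightedCompositions hw, sum_eq_zero_iff, mem_univ, true_implies,
      mul_eq_zero, mem_singleton, funext_iff, Pi.zero_apply]
    exact forall_congr' fun p => or_iff_right (hw p).ne'
  simp [compositionSum, this, expCoeff]

lemma succ_mul_expCoeff_add_single (c : ι → ℕ) (p : ι) :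
    (c p + 1) * expCoeff r (c + Pi.single p 1) = r p * expCoeff r c := by
  simp only [expCoeff, ← mul_prod_erase univ _ (mem_univ p), Pi.add_apply, Pi.single_eq_same]
  rw [prod_congr rfl fun q hq => by rw [Pi.single_eq_of_ne (ne_of_mem_erase hq), add_zero]]
  rw [factorial_succ, pow_succ]
  push_cast
  field_simp

lemma sum_coord_mul_expCoeff_of_lt (hw : ∀ p, 0 < w p) {p : ι} {m : ℕ} (hm : m < w p) :
    ∑ c ∈ weightedCompositions w m, (c p : ℝ) * expCoeff r c = 0 := by
  refine sum_eq_zero fun c hc => ?_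
  have hle := mul_le_of_weightedSum_eq ((mem_weightedCompositions hw).mp hc) p
  have : c p = 0 := by
    by_contra h
    have := Nat.le_mul_of_pos_right (w p) (Nat.pos_of_ne_zero h)
    omega
  simp [this]

lemma sum_coord_mul_expCoeff_of_le (hw : ∀ p, 0 < w p) {p : ι} {m : ℕ} (hm : w p ≤ m) :
    ∑ c ∈ weightedCompositions w m, (c p : ℝ) * expCoeff r c =
      r p * compositionSum w r (m - w p) := by
  rw [compositionSum, mul_sum]
  simp_rw [← succ_mul_expCoeff_add_single]
  symm
  refine sum_bij_ne_zero (fun c _ _ => c + Pi.single p 1) (fun c hc _ => ?_)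
    (fun _ _ _ _ _ _ h => add_right_cancel h) (fun c hc hne => ?_) (fun c _ _ => by simp)
  · rw [mem_weightedCompositions hw] at hc ⊢
    rw [weightedSum_add_single, hc]
    omega
  · have hcp : c p ≠ 0 := by rintro h; simp [h] at hne
    have hc' : c - Pi.single p 1 + Pi.single p 1 = c := by
      ext q
      rcases eq_or_ne q p with rfl | hq <;> simp [*]
      omega
    refine ⟨c - Pi.single p 1, ?_, ?_, hc'⟩
    · rw [mem_weightedCompositions hw] at hc ⊢
      have := weightedSum_add_single w (c - Pi.single p 1) p
      rw [hc', hc] at this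
      omega
    · rw [← hc'] at hne
      simpa using hne

lemma natCast_mul_compositionSum (hw : ∀ p, 0 < w p) (m : ℕ) :
    (m : ℝ) * compositionSum w r m =
      ∑ p, if w p ≤ m then w p * r p * compositionSum w r (m - w p) else 0 := by
  have hm : ∀ c ∈ weightedCompositions w m,
      (m : ℝ) * expCoeff r c = ∑ p, (w p : ℝ) * ((c p : ℝ) * expCoeff r c) := by
    intro c hc
    rw [← (mem_weightedCompositions hw).mp hc]
    push_cast
    rw [sum_mul]
    exact sum_congr rfl fun p _ => by ring
  rw [compositionSum, mul_sum, sum_congr rfl hm, sum_comm]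
  refine sum_congr rfl fun p _ => ?_
  rw [← mul_sum]
  split_ifs with h
  · rw [sum_coord_mul_expCoeff_of_le r hw h, mul_assoc]
  · rw [sum_coord_mul_expCoeff_of_lt r hw (not_le.mp h), mul_zero]

section Probability

variable {Ω : Type*} [MeasurableSpace Ω] {μ : Measure Ω} {X : ι → Ω → ℕ}

lemma measure_weightedSum_eq_sum_prod [IsFiniteMeasure μ] (hX : ∀ p, Measurable (X p))
    (hind : iIndepFun X μ) (hw : ∀ p, 0 < w p) (m : ℕ) :
    (μ {ω | ∑ p, w p * X p ω = m}).toReal =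
      ∑ c ∈ weightedCompositions w m, ∏ p, (μ {ω | X p ω = c p}).toReal := by
  have hevent : {ω | ∑ p, w p * X p ω = m} =
      ⋃ c ∈ weightedCompositions w m, ⋂ p, X p ⁻¹' {c p} := by
    ext ω
    simp only [Set.mem_ofPred_eq, Set.mem_iUnion, Set.mem_iInter, Set.mem_preimage,
      Set.mem_singleton_iff, mem_weightedCompositions hw, exists_prop]
    exact ⟨fun h => ⟨fun p => X p ω, h, fun _ => rfl⟩,
      fun ⟨c, hc, hXc⟩ => by simpa only [hXc] using hc⟩
  have hdisj : (weightedCompositions w m : Set (ι → ℕ)).PairwiseDisjoint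
      fun c => ⋂ p, X p ⁻¹' {c p} := by
    refine fun c _ c' _ hne => Set.disjoint_left.mpr fun ω hc hc' => hne (funext fun p => ?_)
    simp only [Set.mem_iInter, Set.mem_preimage, Set.mem_singleton_iff] at hc hc'
    rw [← hc p, ← hc' p]
  rw [hevent, measure_biUnion_finset hdisj
    fun c _ => MeasurableSet.iInter fun p => hX p (measurableSet_singleton _),
    ENNReal.toReal_sum fun _ _ => measure_ne_top _ _]
  refine sum_congr rfl fun c _ => ?_
  rw [hind.meas_iInter fun p => ⟨{c p}, trivial, rfl⟩, ENNReal.toReal_prod]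
  rfl

lemma measure_weightedSum_eq_of_poisson [IsFiniteMeasure μ] (hX : ∀ p, Measurable (X p))
    (hind : iIndepFun X μ) (hw : ∀ p, 0 < w p)
    (hpois : ∀ p a, (μ {ω | X p ω = a}).toReal = Real.exp (-r p) * r p ^ a / a !) (m : ℕ) :
    (μ {ω | ∑ p, w p * X p ω = m}).toReal = Real.exp (-∑ p, r p) * compositionSum w r m := by
  rw [measure_weightedSum_eq_sum_prod hX hind hw, compositionSum, mul_sum]
  refine sum_congr rfl fun c _ => ?_
  rw [← sum_neg_distrib, Real.exp_sum, expCoeff, ← prod_mul_distrib]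
  exact prod_congr rfl fun p _ => by rw [hpois, mul_div_assoc]

end Probability

lemma compositionSum_harmonic {k n : ℕ} (θ : Fin k → ℝ) {m : ℕ} (hm : m ≤ n) :
    compositionSum (fun p : Fin k × Fin n => (p.2 : ℕ) + 1) (fun p => θ p.1 / ((p.2 : ℕ) + 1)) m =
      (ascPochhammer ℝ m).eval (∑ l, θ l) / m ! := by
  set S := compositionSum (fun p : Fin k × Fin n => (p.2 : ℕ) + 1)
    (fun p => θ p.1 / ((p.2 : ℕ) + 1))
  have hw : ∀ p : Fin k × Fin n, 0 < (p.2 : ℕ) + 1 := fun _ => Nat.add_one_pos _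
  have hrec : ∀ m ≤ n, (m : ℝ) * S m = (∑ l, θ l) * ∑ i ∈ range m, S i := by
    intro m hm
    rw [natCast_mul_compositionSum _ hw, Fintype.sum_prod_type, sum_mul]
    refine sum_congr rfl fun l _ => ?_
    rw [← Fin.sum_ite_add_one_le_eq_sum_range _ hm, mul_sum]
    refine sum_congr rfl fun j _ => ?_
    split_ifs
    · push_cast
      field_simp
      rfl
    · rw [mul_zero]
  induction m using Nat.strong_induction_on with
  | _ m ih =>
    rcases Nat.eq_zero_or_pos m with rfl | hpos
    · simp [S, compositionSum_zero _ hw]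
    have hsum : ∑ i ∈ range m, S i = ∑ i ∈ range m, (ascPochhammer ℝ i).eval (∑ l, θ l) / i ! :=
      sum_congr rfl fun i hi => ih i (mem_range.mp hi) (by rw [mem_range] at hi; omega)
    refine mul_left_cancel₀ (Nat.cast_ne_zero.mpr hpos.ne') ?_
    rw [hrec m hm, hsum, natCast_mul_ascPochhammer_eval_div_factorial]

end WeightedComposition

open WeightedComposition in
theorem poisson_weighted_sum_prob_general
    {Ω : Type*} [MeasureSpace Ω] [IsProbabilityMeasure (ℙ : Measure Ω)]
    (k n : ℕ) (θ : Fin k → ℝ)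
    (η : Fin k → Fin n → Ω → ℕ) (hmeas : ∀ l j, Measurable (η l j))
    (hind : iIndepFun
      (fun p : Fin k × Fin n => η p.1 p.2) ℙ)
    (hpois : ∀ l (j : Fin n) (p : ℕ),
      (ℙ {ω | η l j ω = p}).toReal =
        Real.exp (-(θ l / ((j : ℕ) + 1))) * (θ l / ((j : ℕ) + 1)) ^ p / (p !)) :
    (ℙ {ω | ∑ l, ∑ j : Fin n, ((j : ℕ) + 1) * η l j ω = n}).toReal =
      (ascPochhammer ℝ n).eval (∑ l, θ l) / (n !) *
        Real.exp (-(∑ l, θ l) * ∑ j ∈ Finset.Icc 1 n, 1 / (j : ℝ)) := by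
  have hevent : {ω | ∑ l, ∑ j : Fin n, ((j : ℕ) + 1) * η l j ω = n} =
      {ω | ∑ p : Fin k × Fin n, ((p.2 : ℕ) + 1) * η p.1 p.2 ω = n} := by
    simp only [Fintype.sum_prod_type]
  rw [hevent, measure_weightedSum_eq_of_poisson (w := fun p : Fin k × Fin n => (p.2 : ℕ) + 1)
    _ (fun p => hmeas p.1 p.2) hind (fun _ => Nat.add_one_pos _) (fun p => hpois p.1 p.2),
    compositionSum_harmonic θ le_rfl, sum_div_succ_eq_mul_sum_Icc, neg_mul, mul_comm]

/-- For independent Poisson random variables `η_j(θ_l)` with means `θ_l/j`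
(`j = 1,…,n`, `l = 1,…,k`), the probability that `Σ_{l,j} j·η_j(θ_l) = n` equals
`((θ₁+…+θ_k)_n/n!)·exp(−(θ₁+…+θ_k)Σ_{j=1}^n 1/j)`. -/
theorem poisson_weighted_sum_prob
    {Ω : Type*} [MeasureSpace Ω] [IsProbabilityMeasure (ℙ : Measure Ω)]
    (k n : ℕ) (θ : Fin k → ℝ) (hθ : ∀ i, 0 < θ i)
    (η : Fin k → Fin n → Ω → ℕ) (hmeas : ∀ l j, Measurable (η l j))
    (hind : iIndepFun
      (fun p : Fin k × Fin n => η p.1 p.2) ℙ)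
    (hpois : ∀ l (j : Fin n) (p : ℕ),
      (ℙ {ω | η l j ω = p}).toReal =
        Real.exp (-(θ l / ((j : ℕ) + 1))) * (θ l / ((j : ℕ) + 1)) ^ p / (p !)) :
    (ℙ {ω | ∑ l, ∑ j : Fin n, ((j : ℕ) + 1) * η l j ω = n}).toReal =
      (ascPochhammer ℝ n).eval (∑ l, θ l) / (n !) *
        Real.exp (-(∑ l, θ l) * ∑ j ∈ Finset.Icc 1 n, 1 / (j : ℝ)) :=
  poisson_weighted_sum_prob_general k n θ η hmeas hind hpois
end

section
/- Let G be a finite group with conjugacy classes c₁,…,c_k and let t₁,…,t_k > 0. For x = ((g₁,…,g_n), s) in the wreath product G ≀ S_n, let [x]_{c_l} denote the number of cycles of s whose cycle-product lies in c_l. Then Σ_{x ∈ G≀S_n} t₁^{[x]_{c₁}} ⋯ t_k^{[x]_{c_k}} = (|c₁|t₁ + … + |c_k|t_k)(|c₁|t₁+…+|c_k|t_k + |G|) ⋯ (|c₁|t₁+…+|c_k|t_k + (n−1)|G|). Consequently P^{Ewens}_{t₁,…,t_k;n}(x) = t₁^{[x]_{c₁}} ⋯ t_k^{[x]_{c_k}}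 / (|G|^n (t₁/ζ_{c₁}+…+t_k/ζ_{c_k})_n), with ζ_{c_l} = |G|/|c_l|, defines a probability measure on G ≀ S_n. -/
open Finset

/-- The cycle-product of the cycle of `s` containing `i`, for an element
`((g₁,…,g_n), s)` of the wreath product `G ≀ S_n`: the ordered product
`g_{i_r} g_{i_{r−1}} ⋯ g_{i₁}` along the cycle `(i, s i, s² i, …)` starting at `i`. -/
noncomputable def cycleProd {G : Type*} [Group G] {n : ℕ} (g : Fin n → G)
    (s : Equiv.Perm (Fin n)) (i : Fin n) : G :=
  (((List.range (Function.minimalPeriod s i)).map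
      (fun t => g ((s ^ t) i))).reverse).prod

/-- The number `[x]_c` of cycles of `x = ((g₁,…,g_n), s) ∈ G ≀ S_n` whose
cycle-product lies in the conjugacy class `c`; cycles are counted via their
minimal representatives. -/
noncomputable def cyclesOfType {G : Type*} [Group G] {n : ℕ} (g : Fin n → G)
    (s : Equiv.Perm (Fin n)) (c : Finset G) : ℕ :=
  Nat.card {i : Fin n // (∀ t : ℕ, i ≤ (s ^ t) i) ∧ cycleProd g s i ∈ c}

/-!
Fix the permutation `s`. Replacing, at the least element `i` of each cycle, the label `g i` by
the cycle-product of that cycle is a bijection of `G^n`, since the cycle-product is `g i` times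
labels sitting at non-minimal points. After this change of variables the weight is a product of
independent factors, one per cycle minimum, so summing over the labels gives
`|G|^(n - cyc s) * (Σ_l |c_l| t_l)^(cyc s)`. Summing over `s`: every permutation of `n + 1`
points arises exactly once from a permutation of `n` points by inserting the new, largest point
either as a fixed point (one more cycle) or right after one of the `n` old points (as many
cycles, and the new point is never a cycle minimum), which gives
`Σ_s a^(n - cyc s) b^(cyc s) = Π_{m<n} (b + m a)`. The Ewens denominator is this same product
with `a = |G|`, `b = Σ_l |c_l| t_l`, written as `|G|^n (b/|G|)_n`.
-/

open Equiv

section CycleMin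

variable {α : Type*}

def IsCycleMin [Preorder α] (s : Perm α) (i : α) : Prop :=
  ∀ t : ℕ, i ≤ (s ^ t) i

open scoped Classical in
noncomputable def numCycles [Fintype α] [Preorder α] (s : Perm α) : ℕ :=
  #{i | IsCycleMin s i}

lemma not_isCycleMin_pow_apply [PartialOrder α] {s : Perm α} {i : α} (hi : IsCycleMin s i)
    {u : ℕ} (hu : 0 < u) (hup : u < Function.minimalPeriod s i) :
    ¬ IsCycleMin s ((s ^ u) i) := by
  intro hmin
  have hback : (s ^ (Function.minimalPeriod s i - u)) ((s ^ u) i) = i := by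
    rw [← Perm.mul_apply, ← pow_add, Nat.sub_add_cancel hup.le, ← Perm.iterate_eq_pow,
      Function.iterate_minimalPeriod]
  have hle : (s ^ u) i ≤ i := by simpa [hback] using hmin (Function.minimalPeriod s i - u)
  have hfix : (s ^ u) i = i := le_antisymm hle (hi u)
  exact Function.not_isPeriodicPt_of_pos_of_lt_minimalPeriod hu.ne' hup
    (by rwa [Function.IsPeriodicPt, Function.IsFixedPt, Perm.iterate_eq_pow])

end CycleMin

section CycleProd

variable {G : Type*} [Group G] {n : ℕ}

lemma cycleProd_eq_mul_apply (g : Fin n → G) (s : Perm (Fin n)) (i : Fin n) :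
    cycleProd g s i =
      ((List.range (Function.minimalPeriod s i - 1)).map
        (fun t => g ((s ^ (t + 1)) i))).reverse.prod * g i := by
  obtain ⟨m, hm⟩ : ∃ m, Function.minimalPeriod s i = m + 1 :=
    Nat.exists_eq_add_one.mpr (MulAction.period_pos_of_orderOf_pos (orderOf_pos s) i)
  rw [cycleProd, hm, Nat.add_sub_cancel, List.range_succ_eq_map]
  simp [Function.comp_def]

open scoped Classical in
noncomputable def cycleProdAtMin (s : Perm (Fin n)) (g : Fin n → G) : Fin n → G :=
  fun i => if IsCycleMin s i then cycleProd g s i else g i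

lemma cycleProdAtMin_injective (s : Perm (Fin n)) :
    Function.Injective (cycleProdAtMin (G := G) s) := by
  classical
  intro g g' h
  have hnon : ∀ j, ¬ IsCycleMin s j → g j = g' j := fun j hj => by
    simpa [cycleProdAtMin, hj] using congrFun h j
  funext i
  by_cases hi : IsCycleMin s i
  · have hcp : cycleProd g s i = cycleProd g' s i := by
      simpa [cycleProdAtMin, hi] using congrFun h i
    have htail : ∀ t ∈ List.range (Function.minimalPeriod s i - 1),
        g ((s ^ (t + 1)) i) = g' ((s ^ (t + 1)) i) := fun t ht =>
      hnon _ (not_isCycleMin_pow_apply hi t.succ_pos (by rw [List.mem_range] at ht; omega))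
    rw [cycleProd_eq_mul_apply, cycleProd_eq_mul_apply, List.map_congr_left htail] at hcp
    exact mul_left_cancel hcp
  · exact hnon i hi

end CycleProd

section SumOverLabels

lemma sum_prod_ite_apply {ι β R : Type*} [Fintype ι] [DecidableEq ι] [Fintype β]
    [CommSemiring R] (P : ι → Prop) [DecidablePred P] (w : β → R) :
    ∑ h : ι → β, ∏ i, (if P i then w (h i) else 1) =
      (Fintype.card β : R) ^ #{i | ¬ P i} * (∑ b, w b) ^ #{i | P i} := by
  rw [← Fintype.prod_sum (fun i b => if P i then w b else 1)]
  simp only [sum_ite_irrel, sum_const, card_univ, nsmul_one]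
  rw [prod_ite, prod_const, prod_const, mul_comm]

variable {G R ι : Type*} [DecidableEq G] [CommSemiring R] [Fintype ι]

/-- The weight `t_l` of the class `c_l` containing `a`, written so as to need no choice of `l`. -/
noncomputable def classWeight (c : ι → Finset G) (t : ι → R) (a : G) : R :=
  ∏ l, if a ∈ c l then t l else 1

lemma sum_classWeight [Fintype G] {c : ι → Finset G} (hcover : ∀ a : G, ∃! l, a ∈ c l)
    (t : ι → R) : ∑ a, classWeight c t a = ∑ l, #(c l) * t l := by
  have hsingle : ∀ a, classWeight c t a = ∑ l, if a ∈ c l then t l else 0 := by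
    intro a
    obtain ⟨l₀, hl₀, huniq⟩ := hcover a
    have hout : ∀ l ≠ l₀, a ∉ c l := fun l hl hmem => hl (huniq l hmem)
    rw [classWeight, Fintype.prod_eq_single l₀ (fun l hl => if_neg (hout l hl)),
      Fintype.sum_eq_single l₀ (fun l hl => if_neg (hout l hl)), if_pos hl₀, if_pos hl₀]
  simp only [hsingle]
  rw [sum_comm]
  simp [sum_ite_mem, sum_const, nsmul_eq_mul]

open scoped Classical in
lemma prod_pow_cyclesOfType [Group G] {n : ℕ} (c : ι → Finset G) (t : ι → R) (g : Fin n → G)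
    (s : Perm (Fin n)) :
    ∏ l, t l ^ cyclesOfType g s (c l) =
      ∏ i, if IsCycleMin s i then classWeight c t (cycleProdAtMin s g i) else 1 := by
  have hcount : ∀ l, cyclesOfType g s (c l) =
      #{i | IsCycleMin s i ∧ cycleProdAtMin s g i ∈ c l} := by
    intro l
    rw [cyclesOfType, Nat.card_eq_fintype_card, Fintype.card_subtype]
    congr 1
    refine filter_congr fun i _ => and_congr_right fun hi => ?_
    rw [cycleProdAtMin, if_pos (show IsCycleMin s i from hi)]
  simp only [hcount, ← prod_const, prod_filter]
  rw [prod_comm]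
  refine prod_congr rfl fun i _ => ?_
  by_cases hi : IsCycleMin s i <;> simp [hi, classWeight]

end SumOverLabels

open scoped Classical in
lemma card_filter_not_isCycleMin {n : ℕ} (s : Perm (Fin n)) :
    #{i | ¬ IsCycleMin s i} = n - numCycles s := by
  have := card_filter_add_card_filter_not (s := univ) (fun i => IsCycleMin s i)
  rw [card_univ, Fintype.card_fin] at this
  rw [numCycles]
  omega

lemma sum_prod_pow_cyclesOfType {G R ι : Type*} [Group G] [Fintype G] [DecidableEq G]
    [CommSemiring R] [Fintype ι] {n : ℕ} {c : ι → Finset G}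
    (hcover : ∀ a : G, ∃! l, a ∈ c l) (t : ι → R) (s : Perm (Fin n)) :
    ∑ g : Fin n → G, ∏ l, t l ^ cyclesOfType g s (c l) =
      (Fintype.card G : R) ^ (n - numCycles s) * (∑ l, #(c l) * t l) ^ numCycles s := by
  classical
  have hbij : Function.Bijective (cycleProdAtMin (G := G) s) :=
    Finite.injective_iff_bijective.mp (cycleProdAtMin_injective s)
  simp only [prod_pow_cyclesOfType]
  rw [hbij.sum_comp (fun h => ∏ i, if IsCycleMin s i then classWeight c t (h i) else 1),
    sum_prod_ite_apply, sum_classWeight hcover, card_filter_not_isCycleMin, numCycles]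

section InsertLast

open Fin

/-- A permutation of `Fin (n + 1)` is a permutation `e` of `Fin n` with `last n` inserted either
as a fixed point (`none`) or into the cycle of `e` right after `j` (`some j`). -/
noncomputable def decomposeLast (n : ℕ) :
    Perm (Fin (n + 1)) ≃ Option (Fin n) × Perm (Fin n) :=
  (permCongr finSuccEquivLast).trans Perm.decomposeOption

variable {n : ℕ} (e : Perm (Fin n))

lemma decomposeLast_symm_apply (p : Option (Fin n)) (x : Fin (n + 1)) :
    (decomposeLast n).symm (p, e) x =
      finSuccEquivLast.symm (swap none p ((finSuccEquivLast x).map e)) := by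
  simp [decomposeLast, permCongr_apply, Perm.decomposeOption]

lemma decomposeLast_symm_none_apply_castSucc (i : Fin n) :
    (decomposeLast n).symm (none, e) (castSucc i) = castSucc (e i) := by
  simp [decomposeLast_symm_apply]

lemma decomposeLast_symm_none_apply_last :
    (decomposeLast n).symm (none, e) (last n) = last n := by
  simp [decomposeLast_symm_apply]

lemma decomposeLast_symm_some_apply_last (j : Fin n) :
    (decomposeLast n).symm (some j, e) (last n) = castSucc j := by
  simp [decomposeLast_symm_apply]

lemma decomposeLast_symm_some_apply_castSucc (j i : Fin n) :
    (decomposeLast n).symm (some j, e) (castSucc i) =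
      if e i = j then last n else castSucc (e i) := by
  by_cases h : e i = j
  · simp [decomposeLast_symm_apply, h]
  · rw [decomposeLast_symm_apply, finSuccEquivLast_castSucc, Option.map_some,
      swap_apply_of_ne_of_ne (by simp) (by simpa using h)]
    simp [h]

lemma decomposeLast_symm_none_pow_apply_castSucc (t : ℕ) (i : Fin n) :
    ((decomposeLast n).symm (none, e) ^ t) (castSucc i) = castSucc ((e ^ t) i) := by
  induction t with
  | zero => simp
  | succ t ih =>
    rw [pow_succ', Perm.mul_apply, ih, decomposeLast_symm_none_apply_castSucc, pow_succ',
      Perm.mul_apply]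

lemma decomposeLast_symm_none_pow_apply_last (t : ℕ) :
    ((decomposeLast n).symm (none, e) ^ t) (last n) = last n := by
  induction t with
  | zero => simp
  | succ t ih => rw [pow_succ', Perm.mul_apply, ih, decomposeLast_symm_none_apply_last]

lemma decomposeLast_symm_some_pow_apply_castSucc (j : Fin n) (t : ℕ) (x : Fin n) :
    (∃ u, ((decomposeLast n).symm (some j, e) ^ t) (castSucc x) = castSucc ((e ^ u) x)) ∨
      ((decomposeLast n).symm (some j, e) ^ t) (castSucc x) = last n ∧ ∃ u, (e ^ u) x = j := by
  induction t with
  | zero => exact Or.inl ⟨0, by simp⟩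
  | succ t ih =>
    rw [pow_succ', Perm.mul_apply]
    rcases ih with ⟨u, hu⟩ | ⟨hl, u, hu⟩
    · rw [hu, decomposeLast_symm_some_apply_castSucc]
      split_ifs with h
      · exact Or.inr ⟨rfl, u + 1, by rw [pow_succ', Perm.mul_apply, h]⟩
      · exact Or.inl ⟨u + 1, by rw [pow_succ', Perm.mul_apply]⟩
    · rw [hl, decomposeLast_symm_some_apply_last, ← hu]
      exact Or.inl ⟨u, rfl⟩

lemma exists_decomposeLast_symm_some_pow_apply_castSucc (j : Fin n) (t : ℕ) (x : Fin n) :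
    ∃ t', ((decomposeLast n).symm (some j, e) ^ t') (castSucc x) = castSucc ((e ^ t) x) := by
  induction t with
  | zero => exact ⟨0, by simp⟩
  | succ t ih =>
    obtain ⟨t', ht'⟩ := ih
    by_cases h : e ((e ^ t) x) = j
    · refine ⟨t' + 2, ?_⟩
      rw [pow_succ', Perm.mul_apply, pow_succ', Perm.mul_apply, ht',
        decomposeLast_symm_some_apply_castSucc, if_pos h, decomposeLast_symm_some_apply_last,
        pow_succ', Perm.mul_apply, h]
    · refine ⟨t' + 1, ?_⟩
      rw [pow_succ', Perm.mul_apply, ht', decomposeLast_symm_some_apply_castSucc, if_neg h,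
        pow_succ', Perm.mul_apply]

lemma isCycleMin_decomposeLast_symm_none_castSucc_iff (i : Fin n) :
    IsCycleMin ((decomposeLast n).symm (none, e)) (castSucc i) ↔ IsCycleMin e i := by
  simp only [IsCycleMin, decomposeLast_symm_none_pow_apply_castSucc, castSucc_le_castSucc_iff]

lemma isCycleMin_decomposeLast_symm_none_last :
    IsCycleMin ((decomposeLast n).symm (none, e)) (last n) := fun t =>
  (decomposeLast_symm_none_pow_apply_last e t).ge

lemma isCycleMin_decomposeLast_symm_some_castSucc_iff (j i : Fin n) :
    IsCycleMin ((decomposeLast n).symm (some j, e)) (castSucc i) ↔ IsCycleMin e i := by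
  constructor
  · intro h t
    obtain ⟨t', ht'⟩ := exists_decomposeLast_symm_some_pow_apply_castSucc e j t i
    simpa [ht'] using h t'
  · intro h t
    rcases decomposeLast_symm_some_pow_apply_castSucc e j t i with ⟨u, hu⟩ | ⟨hl, -⟩
    · simpa [hu] using h u
    · simpa [hl] using le_last (castSucc i)

lemma not_isCycleMin_decomposeLast_symm_some_last (j : Fin n) :
    ¬ IsCycleMin ((decomposeLast n).symm (some j, e)) (last n) := fun h => by
  simpa [decomposeLast_symm_some_apply_last] using (castSucc_lt_last j).trans_le (h 1)

lemma card_filter_univ_castSucc (p : Fin (n + 1) → Prop) [DecidablePred p] :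
    #{i | p i} = #{i : Fin n | p (castSucc i)} + if p (last n) then 1 else 0 := by
  simp only [card_filter, sum_univ_castSucc]

open scoped Classical in
lemma numCycles_decomposeLast_symm_none :
    numCycles ((decomposeLast n).symm (none, e)) = numCycles e + 1 := by
  simp only [numCycles, card_filter_univ_castSucc,
    isCycleMin_decomposeLast_symm_none_castSucc_iff, isCycleMin_decomposeLast_symm_none_last,
    if_true]

open scoped Classical in
lemma numCycles_decomposeLast_symm_some (j : Fin n) :
    numCycles ((decomposeLast n).symm (some j, e)) = numCycles e := by
  simp only [numCycles, card_filter_univ_castSucc,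
    isCycleMin_decomposeLast_symm_some_castSucc_iff,
    not_isCycleMin_decomposeLast_symm_some_last, if_false, add_zero]

end InsertLast

lemma numCycles_le {n : ℕ} (s : Perm (Fin n)) : numCycles s ≤ n := by
  classical
  simpa [numCycles] using card_filter_le univ (IsCycleMin s)

/-- The generating function of permutations by number of cycles, in homogeneous form. -/
theorem sum_pow_numCycles {R : Type*} [CommSemiring R] (a b : R) (n : ℕ) :
    ∑ s : Perm (Fin n), a ^ (n - numCycles s) * b ^ numCycles s =
      ∏ m ∈ range n, (b + m * a) := by
  induction n with
  | zero => simp [numCycles]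
  | succ n ih =>
    rw [← (decomposeLast n).symm.sum_comp, Fintype.sum_prod_type, Fintype.sum_option]
    simp only [numCycles_decomposeLast_symm_none, numCycles_decomposeLast_symm_some,
      Nat.add_sub_add_right, Nat.succ_sub (numCycles_le _), pow_succ, sum_const, card_univ,
      Fintype.card_fin, prod_range_succ, ← ih]
    rw [mul_add, sum_mul, nsmul_eq_mul, sum_mul, mul_sum]
    congr 1 <;> refine sum_congr rfl fun s _ => by ring

lemma pow_mul_ascPochhammer_eval_div {K : Type*} [Field K] {a : K} (ha : a ≠ 0) (x : K)
    (n : ℕ) : a ^ n * (ascPochhammer K n).eval (x / a) = ∏ m ∈ range n, (x + m * a) := by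
  induction n with
  | zero => simp
  | succ n ih =>
    rw [ascPochhammer_succ_eval, prod_range_succ, ← ih]
    field_simp
    ring

theorem wreath_ewens_normalization_general
    {G : Type*} [Group G] [Fintype G] (k n : ℕ) (c : Fin k → Finset G)
    (hcover : ∀ a : G, ∃! l, a ∈ c l)
    (t : Fin k → ℝ) (ht : ∀ l, 0 < t l) :
    (∑ x : (Fin n → G) × Equiv.Perm (Fin n),
        ∏ l, t l ^ cyclesOfType x.1 x.2 (c l)) =
      ∏ m ∈ Finset.range n,
        ((∑ l, ((c l).card : ℝ) * t l) + m * (Fintype.card G : ℝ)) ∧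
    (∑ x : (Fin n → G) × Equiv.Perm (Fin n),
        (∏ l, t l ^ cyclesOfType x.1 x.2 (c l)) /
          ((Fintype.card G : ℝ) ^ n *
            (ascPochhammer ℝ n).eval
              (∑ l, t l / ((Fintype.card G : ℝ) / (c l).card)))) = 1 := by
  classical
  set T : ℝ := ∑ l, ((c l).card : ℝ) * t l
  have hsum : (∑ x : (Fin n → G) × Perm (Fin n), ∏ l, t l ^ cyclesOfType x.1 x.2 (c l)) =
      ∏ m ∈ range n, (T + m * Fintype.card G) := by
    rw [Fintype.sum_prod_type, sum_comm, ← sum_pow_numCycles]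
    exact sum_congr rfl fun s _ => sum_prod_pow_cyclesOfType hcover t s
  have hG : (0 : ℝ) < Fintype.card G := by exact_mod_cast Fintype.card_pos
  have hT : 0 < T := by
    obtain ⟨l, hl, -⟩ := hcover 1
    exact sum_pos' (fun l _ => mul_nonneg (Nat.cast_nonneg _) (ht l).le)
      ⟨l, mem_univ l, mul_pos (by exact_mod_cast card_pos.mpr ⟨1, hl⟩) (ht l)⟩
  have hdenom : (Fintype.card G : ℝ) ^ n *
      (ascPochhammer ℝ n).eval (∑ l, t l / ((Fintype.card G : ℝ) / (c l).card)) =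
      ∏ m ∈ range n, (T + m * Fintype.card G) := by
    have hargument : ∑ l, t l / ((Fintype.card G : ℝ) / (c l).card) = T / Fintype.card G := by
      rw [sum_div]
      exact sum_congr rfl fun l _ => by rw [div_div_eq_mul_div, mul_comm]
    rw [hargument, pow_mul_ascPochhammer_eval_div hG.ne']
  refine ⟨hsum, ?_⟩
  rw [← sum_div, hsum, hdenom, div_self (prod_pos fun m _ => add_pos_of_pos_of_nonneg hT (by positivity)).ne']

/-- The wreath-product normalization identity:
`Σ_{x ∈ G≀S_n} t₁^{[x]_{c₁}} ⋯ t_k^{[x]_{c_k}}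
  = Π_{m=0}^{n−1} (|c₁|t₁+…+|c_k|t_k + m|G|)`,
and consequently `P^{Ewens}_{t₁,…,t_k;n}` is a probability measure on `G ≀ S_n`. -/
theorem wreath_ewens_normalization
    {G : Type*} [Group G] [Fintype G] (k n : ℕ) (c : Fin k → Finset G)
    (hcover : ∀ a : G, ∃! l, a ∈ c l)
    (hconj : ∀ l, ∀ a ∈ c l, ∀ b : G, b ∈ c l ↔ IsConj a b)
    (t : Fin k → ℝ) (ht : ∀ l, 0 < t l) :
    (∑ x : (Fin n → G) × Equiv.Perm (Fin n),
        ∏ l, t l ^ cyclesOfType x.1 x.2 (c l)) =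
      ∏ m ∈ Finset.range n,
        ((∑ l, ((c l).card : ℝ) * t l) + m * (Fintype.card G : ℝ)) ∧
    (∑ x : (Fin n → G) × Equiv.Perm (Fin n),
        (∏ l, t l ^ cyclesOfType x.1 x.2 (c l)) /
          ((Fintype.card G : ℝ) ^ n *
            (ascPochhammer ℝ n).eval
              (∑ l, t l / ((Fintype.card G : ℝ) / (c l).card)))) = 1 :=
  wreath_ewens_normalization_general k n c hcover t ht
end
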